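/- arXiv:math/0702351 — 2 statements merged into one kernel-verified Lean document; each statement's English description precedes it below -/
import Mathlib

section
/- Let P be a hereditary property of ordered graphs such that every graph in P has maximum degree at most 1, and suppose that for every constant c > 0 there exists N ∈ ℕ with |P_N| > c^N. Then for every k ∈ ℕ and every permutation π of [k], the ordered graph H(π) belongs to P_{2k}, and consequently |P_n| ≥ Σ_{k=0}^{⌊n/2⌋} C(n,2k)·k! for every n ∈ ℕ. -/
/-!
If some `H(π)` were missing from `P`, no graph of `P` could contain a *split* copy of `π` (edges
`Lᵢ Rπ(i)` with all left ends before all right ends): in a graph of maximum degree one such a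
copy is induced, so heredity would put `H(π)` in `P`. A Marcus–Tardos argument with blocks of
size `4k²` shows that split-`π`-free ordered graphs on `[n]` have `O(n)` edges, and Klazar's
argument, contracting consecutive pairs of vertices, turns this into at most `cⁿ` such graphs,
contradicting the speed hypothesis.

Conversely, if `P` contains every `H(σ)`, then every matching on `[n]` joining the first `k`
vertices of a `2k`-set `U` bijectively to its last `k` vertices is an induced subgraph of some
`H(σ)`, and there are `C(n, 2k) k!` of these.
-/

/-- The element `i ∈ [k]` viewed as an element of `[2k]` (the left half). -/
def finL (k : ℕ) (i : Fin k) : Fin (2 * k) := ⟨i.1, by have := i.isLt; omega⟩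

/-- The element `π(i) + k` viewed as an element of `[2k]` (the right half). -/
def finR (k : ℕ) (i : Fin k) : Fin (2 * k) := ⟨k + i.1, by have := i.isLt; omega⟩

/-- The ordered graph `H(π)` on `[2k]` whose edges are the pairs `{i, π(i)+k}` for `i ∈ [k]`. -/
def HpermGraph (k : ℕ) (π : Equiv.Perm (Fin k)) : SimpleGraph (Fin (2 * k)) :=
  SimpleGraph.fromEdgeSet {e | ∃ i : Fin k, e = s(finL k i, finR k (π i))}

/-- The ordered graph on `[|U|]` obtained from the induced subgraph of `G` on `U ⊆ [n]`
via the unique order isomorphism `[|U|] → U`. -/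
def inducedOG {n : ℕ} (G : SimpleGraph (Fin n)) (U : Finset (Fin n)) :
    SimpleGraph (Fin U.card) :=
  SimpleGraph.comap (fun i : Fin U.card => U.orderEmbOfFin rfl i) G

open Finset

section HpermGraph

variable {k : ℕ}

lemma finL_injective (k : ℕ) : Function.Injective (finL k) := fun i j h => by
  simpa [finL, Fin.ext_iff] using h

lemma finR_injective (k : ℕ) : Function.Injective (finR k) := fun i j h => by
  simpa [finR, Fin.ext_iff] using h

lemma finL_ne_finR (i j : Fin k) : finL k i ≠ finR k j := by
  simp only [finL, finR, ne_eq, Fin.ext_iff]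
  omega

lemma finR_ne_finL (i j : Fin k) : finR k j ≠ finL k i := (finL_ne_finR i j).symm

lemma finL_lt_finR (i j : Fin k) : finL k i < finR k j := by
  simp only [finL, finR, Fin.lt_def]
  omega

lemma finL_or_finR (t : Fin (2 * k)) : (∃ i, t = finL k i) ∨ ∃ j, t = finR k j := by
  by_cases ht : t.1 < k
  · exact .inl ⟨⟨t, ht⟩, rfl⟩
  · exact .inr ⟨⟨t - k, by omega⟩, Fin.ext (by simp only [finR]; omega)⟩

lemma HpermGraph_adj {π : Equiv.Perm (Fin k)} {a b : Fin (2 * k)} :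
    (HpermGraph k π).Adj a b ↔
      (∃ i, a = finL k i ∧ b = finR k (π i)) ∨ ∃ i, b = finL k i ∧ a = finR k (π i) := by
  simp only [HpermGraph, SimpleGraph.fromEdgeSet_adj, Set.mem_ofPred_eq, Sym2.eq_iff]
  constructor
  · rintro ⟨⟨i, h | h⟩, -⟩
    exacts [.inl ⟨i, h⟩, .inr ⟨i, h.symm⟩]
  · rintro (⟨i, rfl, rfl⟩ | ⟨i, rfl, rfl⟩)
    exacts [⟨⟨i, .inl ⟨rfl, rfl⟩⟩, finL_ne_finR _ _⟩,
      ⟨⟨i, .inr ⟨rfl, rfl⟩⟩, finR_ne_finL _ _⟩]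

lemma HpermGraph_adj_finL_finR {π : Equiv.Perm (Fin k)} {i j : Fin k} :
    (HpermGraph k π).Adj (finL k i) (finR k j) ↔ π i = j := by
  simp [HpermGraph_adj, (finL_injective k).eq_iff, (finR_injective k).eq_iff, finL_ne_finR,
    eq_comm (a := j)]

lemma HpermGraph_not_adj_finL_finL {π : Equiv.Perm (Fin k)} {i j : Fin k} :
    ¬ (HpermGraph k π).Adj (finL k i) (finL k j) := by
  simp [HpermGraph_adj, finL_ne_finR]

lemma HpermGraph_not_adj_finR_finR {π : Equiv.Perm (Fin k)} {i j : Fin k} :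
    ¬ (HpermGraph k π).Adj (finR k i) (finR k j) := by
  simp [HpermGraph_adj, finR_ne_finL]

lemma HpermGraph_support (π : Equiv.Perm (Fin k)) : (HpermGraph k π).support = Set.univ := by
  refine Set.eq_univ_of_forall fun t => ?_
  rcases finL_or_finR t with ⟨i, rfl⟩ | ⟨j, rfl⟩
  · exact ⟨finR k (π i), HpermGraph_adj_finL_finR.mpr rfl⟩
  · exact ⟨finL k (π.symm j), (HpermGraph_adj_finL_finR.mpr (π.apply_symm_apply j)).symm⟩

lemma HpermGraph_injective : Function.Injective (HpermGraph k) := by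
  intro π π' h
  ext i
  have := HpermGraph_adj_finL_finR.mpr (rfl : π i = π i)
  rw [h, HpermGraph_adj_finL_finR] at this
  rw [this]

end HpermGraph

section Hereditary

def IsHereditary (P : ∀ n : ℕ, Set (SimpleGraph (Fin n))) : Prop :=
  ∀ n : ℕ, ∀ G ∈ P n, ∀ U : Finset (Fin n), inducedOG G U ∈ P U.card

variable {P : ∀ n : ℕ, Set (SimpleGraph (Fin n))}

lemma IsHereditary.comap_orderEmbOfFin_mem (hP : IsHereditary P) {n m : ℕ}
    {G : SimpleGraph (Fin n)} (hG : G ∈ P n) (U : Finset (Fin n)) (hU : U.card = m) :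
    G.comap (U.orderEmbOfFin hU) ∈ P m := by
  subst hU
  exact hP n G hG U

lemma IsHereditary.comap_mem (hP : IsHereditary P) {n m : ℕ}
    {G : SimpleGraph (Fin n)} (hG : G ∈ P n) {f : Fin m → Fin n} (hf : StrictMono f) :
    G.comap f ∈ P m := by
  classical
  have hcard : #(univ.image f) = m := by
    rw [card_image_of_injective _ hf.injective, card_univ, Fintype.card_fin]
  have h := hP.comap_orderEmbOfFin_mem hG _ hcard
  rwa [← orderEmbOfFin_unique hcard (fun x => mem_image_of_mem f (mem_univ x)) hf] at h

end Hereditary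

section SplitCopy

variable {k n : ℕ} {π : Equiv.Perm (Fin k)} {G : SimpleGraph (Fin n)}

/-- `L` and `R` place a copy of `H(π)` in `G`, with every left vertex before every right one;
the copy need not be induced. -/
def SplitCopy (π : Equiv.Perm (Fin k)) (G : SimpleGraph (Fin n)) (L R : Fin k → Fin n) :
    Prop :=
  StrictMono L ∧ StrictMono R ∧ (∀ i j, L i < R j) ∧ ∀ i, G.Adj (L i) (R (π i))

def SplitFree (π : Equiv.Perm (Fin k)) (G : SimpleGraph (Fin n)) : Prop :=
  ∀ L R, ¬ SplitCopy π G L R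

lemma SplitFree.pos (hG : SplitFree π G) : 0 < k := by
  by_contra! hk
  obtain rfl : k = 0 := by omega
  exact hG finZeroElim finZeroElim
    ⟨fun i => i.elim0, fun i => i.elim0, fun i => i.elim0, fun i => i.elim0⟩

def splitEmb (L R : Fin k → Fin n) (t : Fin (2 * k)) : Fin n :=
  if h : t.1 < k then L ⟨t, h⟩ else R ⟨t - k, by omega⟩

@[simp]
lemma splitEmb_finL (L R : Fin k → Fin n) (i : Fin k) : splitEmb L R (finL k i) = L i :=
  dif_pos i.isLt

@[simp]
lemma splitEmb_finR (L R : Fin k → Fin n) (j : Fin k) : splitEmb L R (finR k j) = R j :=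
  (dif_neg (by simp [finR])).trans (congrArg R (Fin.ext (by simp [finR])))

lemma SplitCopy.strictMono_splitEmb {L R : Fin k → Fin n} (h : SplitCopy π G L R) :
    StrictMono (splitEmb L R) := by
  obtain ⟨hL, hR, hLR, -⟩ := h
  intro s t hst
  rcases finL_or_finR s with ⟨i, rfl⟩ | ⟨j, rfl⟩ <;>
    rcases finL_or_finR t with ⟨i', rfl⟩ | ⟨j', rfl⟩
  · rw [splitEmb_finL, splitEmb_finL]
    exact hL hst
  · rw [splitEmb_finL, splitEmb_finR]
    exact hLR i j'
  · exact absurd hst (finL_lt_finR i' j).not_gt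
  · rw [splitEmb_finR, splitEmb_finR]
    exact hR (by simpa only [finR, Fin.lt_def, add_lt_add_iff_left] using hst)

lemma SplitCopy.comap_splitEmb {L R : Fin k → Fin n} (h : SplitCopy π G L R)
    (huniq : ∀ v a b, G.Adj v a → G.Adj v b → a = b) :
    G.comap (splitEmb L R) = HpermGraph k π := by
  obtain ⟨-, hR, hLR, hadj⟩ := h
  have hadj' (j : Fin k) : G.Adj (R j) (L (π.symm j)) := by
    simpa using (hadj (π.symm j)).symm
  ext s t
  rw [SimpleGraph.comap_adj]
  rcases finL_or_finR s with ⟨i, rfl⟩ | ⟨j, rfl⟩ <;>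
    rcases finL_or_finR t with ⟨i', rfl⟩ | ⟨j', rfl⟩ <;>
    simp only [splitEmb_finL, splitEmb_finR]
  · simp only [HpermGraph_not_adj_finL_finL, iff_false]
    exact fun h' => (hLR i' (π i)).ne (huniq _ _ _ h' (hadj i))
  · rw [HpermGraph_adj_finL_finR]
    exact ⟨fun h' => hR.injective (huniq _ _ _ (hadj i) h'), by rintro rfl; exact hadj i⟩
  · rw [SimpleGraph.adj_comm _ (finR k j), HpermGraph_adj_finL_finR, G.adj_comm]
    exact ⟨fun h' => hR.injective (huniq _ _ _ (hadj i') h'), by rintro rfl; exact hadj i'⟩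
  · simp only [HpermGraph_not_adj_finR_finR, iff_false]
    exact fun h' => (hLR (π.symm j) j').ne' (huniq _ _ _ h' (hadj' j))

lemma HpermGraph_mem_of_splitCopy {P : ∀ n : ℕ, Set (SimpleGraph (Fin n))}
    (hP : IsHereditary P) (hG : G ∈ P n) (hdeg : ∀ v, (G.neighborSet v).ncard ≤ 1)
    {L R : Fin k → Fin n} (h : SplitCopy π G L R) : HpermGraph k π ∈ P (2 * k) := by
  have huniq (v a b : Fin n) (ha : G.Adj v a) (hb : G.Adj v b) : a = b :=
    (Set.ncard_le_one (Set.toFinite _)).mp (hdeg v) a ha b hb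
  rw [← h.comap_splitEmb huniq]
  exact hP.comap_mem hG h.strictMono_splitEmb

end SplitCopy

section Blocks

variable {n s : ℕ}

def blockOf (s : ℕ) (v : Fin n) : Fin (n / s + 1) :=
  ⟨v / s, Nat.lt_succ_of_le (Nat.div_le_div_right v.2.le)⟩

lemma blockOf_mono {a b : Fin n} (h : a ≤ b) : blockOf s a ≤ blockOf s b :=
  Nat.div_le_div_right (c := s) h

lemma lt_of_blockOf_lt {a b : Fin n} (h : blockOf s a < blockOf s b) : a < b :=
  lt_of_not_ge fun h' => (blockOf_mono h').not_gt h

def block (s : ℕ) (u : Fin (n / s + 1)) : Finset (Fin n) :=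
  univ.filter fun v => blockOf s v = u

@[simp]
lemma mem_block {u : Fin (n / s + 1)} {v : Fin n} : v ∈ block s u ↔ blockOf s v = u := by
  simp [block]

lemma card_block_le (hs : 0 < s) (u : Fin (n / s + 1)) : #(block s u) ≤ s := by
  have hsub : ((block s u).image Fin.val) ⊆ Finset.Ico (u * s) (u * s + s) := by
    intro x hx
    obtain ⟨v, hv, rfl⟩ := mem_image.mp hx
    rw [mem_block, blockOf, Fin.ext_iff] at hv
    rw [mem_Ico, ← hv]
    exact ⟨Nat.div_mul_le_self _ _, Nat.lt_div_mul_add hs⟩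
  simpa [card_image_of_injective _ Fin.val_injective] using card_le_card hsub

def blockGraph (s : ℕ) (G : SimpleGraph (Fin n)) : SimpleGraph (Fin (n / s + 1)) where
  Adj u v := u ≠ v ∧ ∃ a b, G.Adj a b ∧ blockOf s a = u ∧ blockOf s b = v
  symm := ⟨fun _ _ ⟨h, a, b, hab, ha, hb⟩ => ⟨h.symm, b, a, hab.symm, hb, ha⟩⟩
  loopless := ⟨fun _ h => h.1 rfl⟩

lemma blockGraph_adj {G : SimpleGraph (Fin n)} {u v : Fin (n / s + 1)} :
    (blockGraph s G).Adj u v ↔ u ≠ v ∧ ∃ a b, G.Adj a b ∧ blockOf s a = u ∧ blockOf s b = v :=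
  Iff.rfl

lemma splitFree_blockGraph {k : ℕ} {π : Equiv.Perm (Fin k)} {G : SimpleGraph (Fin n)}
    (hG : SplitFree π G) : SplitFree π (blockGraph s G) := by
  rintro L R ⟨hL, hR, hLR, hadj⟩
  choose a b hab ha hb using fun i => (blockGraph_adj.mp (hadj i)).2
  refine hG a (fun j => b (π.symm j)) ⟨fun i j hij => ?_, fun i j hij => ?_, fun i j => ?_, ?_⟩
  · exact lt_of_blockOf_lt (s := s) (by rw [ha, ha]; exact hL hij)
  · exact lt_of_blockOf_lt (s := s) (by simpa [hb] using hR hij)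
  · exact lt_of_blockOf_lt (s := s) (by simpa [ha, hb] using hLR i j)
  · simpa using hab

open Classical in
noncomputable def edgePairs (G : SimpleGraph (Fin n)) : Finset (Fin n × Fin n) :=
  univ.filter fun p => p.1 < p.2 ∧ G.Adj p.1 p.2

@[simp]
lemma mem_edgePairs {G : SimpleGraph (Fin n)} {p : Fin n × Fin n} :
    p ∈ edgePairs G ↔ p.1 < p.2 ∧ G.Adj p.1 p.2 := by
  simp [edgePairs]

lemma edgePairs_injective : Function.Injective (edgePairs (n := n)) := by
  intro G G' h
  have key (a b : Fin n) (hab : a < b) : G.Adj a b ↔ G'.Adj a b := by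
    simpa [hab] using congrArg (fun E => (a, b) ∈ E) h
  ext a b
  rcases lt_trichotomy a b with hab | rfl | hab
  · exact key a b hab
  · simp
  · rw [G.adj_comm, G'.adj_comm]
    exact key b a hab

def blockPairs (s : ℕ) (q : Fin (n / s + 1) × Fin (n / s + 1)) : Finset (Fin n × Fin n) :=
  block s q.1 ×ˢ block s q.2

lemma card_blockPairs_le (hs : 0 < s) (q : Fin (n / s + 1) × Fin (n / s + 1)) :
    #(blockPairs s q) ≤ s * s := by
  rw [blockPairs, card_product]
  exact Nat.mul_le_mul (card_block_le hs _) (card_block_le hs _)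

lemma edgePairs_subset_biUnion_blockPairs (G : SimpleGraph (Fin n)) :
    edgePairs G ⊆ ((univ : Finset (Fin (n / s + 1))).diag ∪ edgePairs (blockGraph s G)).biUnion
      (blockPairs s) := by
  rintro ⟨a, b⟩ hp
  obtain ⟨hab, hadj⟩ := mem_edgePairs.mp hp
  simp only [mem_biUnion, mem_union, mem_diag, mem_univ, true_and, mem_edgePairs]
  refine ⟨(blockOf s a, blockOf s b), ?_, by simp [blockPairs]⟩
  rcases (blockOf_mono (s := s) hab.le).eq_or_lt with h | h
  · exact .inl h
  · exact .inr ⟨h, blockGraph_adj.mpr ⟨h.ne, a, b, hadj, rfl, rfl⟩⟩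

lemma card_biUnion_blockPairs_le (hs : 0 < s) (H : SimpleGraph (Fin (n / s + 1))) :
    #(((univ : Finset (Fin (n / s + 1))).diag ∪ edgePairs H).biUnion
      (blockPairs (n := n) s)) ≤ (n / s + 1 + #(edgePairs H)) * (s * s) := by
  refine card_biUnion_le.trans ((sum_le_card_nsmul _ _ _ fun q _ =>
    card_blockPairs_le hs q).trans ?_)
  rw [smul_eq_mul]
  gcongr
  exact (card_union_le _ _).trans (by simp)

end Blocks

section MarcusTardos

lemma exists_common_subset_of_choose_mul_lt {ι α : Type*} [DecidableEq α] {B : Finset α}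
    {W : Finset ι} {T : ι → Finset α} {k : ℕ} (hT : ∀ v ∈ W, T v ⊆ B ∧ k ≤ #(T v))
    (hW : (#B).choose k * k < #W) :
    ∃ S ⊆ B, #S = k ∧ ∃ V ⊆ W, #V = k ∧ ∀ v ∈ V, S ⊆ T v := by
  choose! g hgT hg using fun v hv => exists_subset_card_eq (hT v hv).2
  have hmaps (v) (hv : v ∈ W) : g v ∈ B.powersetCard k :=
    mem_powersetCard.mpr ⟨(hgT v hv).trans (hT v hv).1, hg v hv⟩
  obtain ⟨S, hS, hfiber⟩ := exists_lt_card_fiber_of_mul_lt_card_of_maps_to hmaps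
    (by rwa [card_powersetCard])
  obtain ⟨V, hV, hVcard⟩ := exists_subset_card_eq hfiber.le
  refine ⟨S, (mem_powersetCard.mp hS).1, (mem_powersetCard.mp hS).2, V,
    hV.trans (filter_subset _ _), hVcard, fun v hv => ?_⟩
  obtain ⟨hvW, rfl⟩ := mem_filter.mp (hV hv)
  exact hgT v hvW

lemma card_le_card_mul_of_rows {α β : Type*} [Fintype α] [Fintype β] [DecidableEq α]
    [DecidableEq β] (X : Finset (α × β)) {c : ℕ} (h : ∀ a, #{b | (a, b) ∈ X} ≤ c) :
    #X ≤ Fintype.card α * c := by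
  calc #X = ∑ a, #{b | (a, b) ∈ X} := by
        simp only [card_filter,
          ← Fintype.sum_prod_type' (fun a b => if (a, b) ∈ X then 1 else 0)]
        simp
    _ ≤ ∑ _a : α, c := sum_le_sum fun a _ => h a
    _ = Fintype.card α * c := by simp

lemma card_le_card_mul_of_cols {α β : Type*} [Fintype α] [Fintype β] [DecidableEq α]
    [DecidableEq β] (X : Finset (α × β)) {c : ℕ} (h : ∀ b, #{a | (a, b) ∈ X} ≤ c) :
    #X ≤ Fintype.card β * c := by
  calc #X = ∑ b, #{a | (a, b) ∈ X} := by
        simp only [card_filter,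
          ← Fintype.sum_prod_type_right' (fun a b => if (a, b) ∈ X then 1 else 0)]
        simp
    _ ≤ ∑ _b : β, c := sum_le_sum fun b _ => h b
    _ = Fintype.card β * c := by simp

variable {k n s : ℕ} {π : Equiv.Perm (Fin k)} {G : SimpleGraph (Fin n)}

noncomputable def edgesOver (s : ℕ) (G : SimpleGraph (Fin n))
    (q : Fin (n / s + 1) × Fin (n / s + 1)) : Finset (Fin n × Fin n) :=
  edgePairs G ∩ blockPairs s q

open Classical in
noncomputable def leftEnds (s : ℕ) (G : SimpleGraph (Fin n))
    (q : Fin (n / s + 1) × Fin (n / s + 1)) : Finset (Fin n) :=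
  (block s q.1).filter fun a => ∃ b ∈ block s q.2, G.Adj a b

open Classical in
noncomputable def rightEnds (s : ℕ) (G : SimpleGraph (Fin n))
    (q : Fin (n / s + 1) × Fin (n / s + 1)) : Finset (Fin n) :=
  (block s q.2).filter fun b => ∃ a ∈ block s q.1, G.Adj a b

@[simp]
lemma mem_leftEnds {q : Fin (n / s + 1) × Fin (n / s + 1)} {a : Fin n} :
    a ∈ leftEnds s G q ↔ blockOf s a = q.1 ∧ ∃ b, blockOf s b = q.2 ∧ G.Adj a b := by
  simp [leftEnds]

@[simp]
lemma mem_rightEnds {q : Fin (n / s + 1) × Fin (n / s + 1)} {b : Fin n} :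
    b ∈ rightEnds s G q ↔ blockOf s b = q.2 ∧ ∃ a, blockOf s a = q.1 ∧ G.Adj a b := by
  simp [rightEnds]

lemma leftEnds_subset_block (q : Fin (n / s + 1) × Fin (n / s + 1)) :
    leftEnds s G q ⊆ block s q.1 :=
  fun _ ha => mem_block.mpr (mem_leftEnds.mp ha).1

lemma rightEnds_subset_block (q : Fin (n / s + 1) × Fin (n / s + 1)) :
    rightEnds s G q ⊆ block s q.2 :=
  fun _ hb => mem_block.mpr (mem_rightEnds.mp hb).1

noncomputable def wideLeft (s k : ℕ) (G : SimpleGraph (Fin n)) :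
    Finset (Fin (n / s + 1) × Fin (n / s + 1)) :=
  univ.filter fun q => q.1 < q.2 ∧ k ≤ #(leftEnds s G q)

noncomputable def wideRight (s k : ℕ) (G : SimpleGraph (Fin n)) :
    Finset (Fin (n / s + 1) × Fin (n / s + 1)) :=
  univ.filter fun q => q.1 < q.2 ∧ k ≤ #(rightEnds s G q)

@[simp]
lemma mem_wideLeft {q : Fin (n / s + 1) × Fin (n / s + 1)} :
    q ∈ wideLeft s k G ↔ q.1 < q.2 ∧ k ≤ #(leftEnds s G q) := by
  simp [wideLeft]

@[simp]
lemma mem_wideRight {q : Fin (n / s + 1) × Fin (n / s + 1)} :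
    q ∈ wideRight s k G ↔ q.1 < q.2 ∧ k ≤ #(rightEnds s G q) := by
  simp [wideRight]

lemma card_edgePairs_le_sum_card_edgesOver (s : ℕ) (G : SimpleGraph (Fin n)) :
    #(edgePairs G) ≤ ∑ q, #(edgesOver s G q) := by
  refine le_trans (card_le_card fun p hp => ?_) card_biUnion_le
  exact mem_biUnion.mpr ⟨(blockOf s p.1, blockOf s p.2), mem_univ _,
    mem_inter.mpr ⟨hp, by simp [blockPairs]⟩⟩

lemma edgesOver_subset_leftEnds_product_rightEnds (q : Fin (n / s + 1) × Fin (n / s + 1)) :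
    edgesOver s G q ⊆ leftEnds s G q ×ˢ rightEnds s G q := by
  rintro ⟨a, b⟩ hp
  simp only [edgesOver, blockPairs, mem_inter, mem_edgePairs, mem_product, mem_block] at hp
  obtain ⟨⟨-, hab⟩, ha, hb⟩ := hp
  simp only [mem_product, mem_leftEnds, mem_rightEnds]
  exact ⟨⟨ha, b, hb, hab⟩, ⟨hb, a, ha, hab⟩⟩

/-- A block pair carrying an edge is diagonal, wide, or an edge of the block graph with fewer
than `k` left ends and fewer than `k` right ends. -/
lemma card_edgesOver_le (hs : 0 < s) (q : Fin (n / s + 1) × Fin (n / s + 1)) :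
    #(edgesOver s G q) ≤ (if q ∈ (univ : Finset (Fin (n / s + 1))).diag then s * s else 0) +
      (if q ∈ edgePairs (blockGraph s G) then k * k else 0) +
      (if q ∈ wideLeft s k G then s * s else 0) + (if q ∈ wideRight s k G then s * s else 0) := by
  rcases (edgesOver s G q).eq_empty_or_nonempty with h | ⟨⟨a, b⟩, hp⟩
  · simp [h]
  simp only [edgesOver, blockPairs, mem_inter, mem_edgePairs, mem_product, mem_block] at hp
  obtain ⟨⟨hab, hadj⟩, ha, hb⟩ := hp
  have hbig : #(edgesOver s G q) ≤ s * s :=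
    (card_le_card inter_subset_right).trans (card_blockPairs_le hs q)
  rcases (ha ▸ hb ▸ blockOf_mono hab.le : q.1 ≤ q.2).eq_or_lt with hq | hq
  · have hdiag : q ∈ (univ : Finset (Fin (n / s + 1))).diag := by simp [hq]
    simp only [hdiag, if_true]
    omega
  by_cases hL : k ≤ #(leftEnds s G q)
  · have hwide : q ∈ wideLeft s k G := mem_wideLeft.mpr ⟨hq, hL⟩
    simp only [hwide, if_true]
    omega
  by_cases hR : k ≤ #(rightEnds s G q)
  · have hwide : q ∈ wideRight s k G := mem_wideRight.mpr ⟨hq, hR⟩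
    simp only [hwide, if_true]
    omega
  have hqH : q ∈ edgePairs (blockGraph s G) :=
    mem_edgePairs.mpr ⟨hq, blockGraph_adj.mpr ⟨hq.ne, a, b, hadj, ha, hb⟩⟩
  have hnarrow : #(edgesOver s G q) ≤ k * k := by
    refine (card_le_card (edgesOver_subset_leftEnds_product_rightEnds q)).trans ?_
    rw [card_product]
    exact Nat.mul_le_mul (by omega) (by omega)
  simp only [hqH, if_true]
  omega

lemma SplitFree.card_wideLeft_row_le (hG : SplitFree π G) (hs : 0 < s) (u : Fin (n / s + 1)) :
    #{v | (u, v) ∈ wideLeft s k G} ≤ s.choose k * k := by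
  by_contra! hW
  obtain ⟨S, hSB, hS, V, hVW, hV, hSV⟩ := exists_common_subset_of_choose_mul_lt
    (B := block s u) (T := fun v => leftEnds s G (u, v))
    (fun v hv => ⟨leftEnds_subset_block _, (mem_wideLeft.mp (mem_filter.mp hv).2).2⟩)
    ((Nat.mul_le_mul_right _ (Nat.choose_le_choose _ (card_block_le hs u))).trans_lt hW)
  set L := S.orderEmbOfFin hS
  set w := V.orderEmbOfFin hV
  have hLu (i) : blockOf s (L i) = u := mem_block.mp (hSB (S.orderEmbOfFin_mem hS i))
  have huw (j) : u < w j :=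
    (mem_wideLeft.mp (mem_filter.mp (hVW (V.orderEmbOfFin_mem hV j))).2).1
  have hy (i) : ∃ b, blockOf s b = w (π i) ∧ G.Adj (L i) b :=
    (mem_leftEnds.mp (hSV _ (V.orderEmbOfFin_mem hV _) (S.orderEmbOfFin_mem hS i))).2
  choose y hyw hy using hy
  refine hG L (fun j => y (π.symm j)) ⟨L.strictMono, fun i j hij => ?_, fun i j => ?_, ?_⟩
  · exact lt_of_blockOf_lt (s := s) (by simpa [hyw] using w.strictMono hij)
  · exact lt_of_blockOf_lt (s := s) (by simpa [hyw, hLu] using huw j)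
  · simpa using hy

lemma SplitFree.card_wideRight_col_le (hG : SplitFree π G) (hs : 0 < s) (v : Fin (n / s + 1)) :
    #{u | (u, v) ∈ wideRight s k G} ≤ s.choose k * k := by
  by_contra! hW
  obtain ⟨S, hSB, hS, V, hVW, hV, hSV⟩ := exists_common_subset_of_choose_mul_lt
    (B := block s v) (T := fun u => rightEnds s G (u, v))
    (fun u hu => ⟨rightEnds_subset_block _, (mem_wideRight.mp (mem_filter.mp hu).2).2⟩)
    ((Nat.mul_le_mul_right _ (Nat.choose_le_choose _ (card_block_le hs v))).trans_lt hW)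
  set R := S.orderEmbOfFin hS
  set w := V.orderEmbOfFin hV
  have hRv (j) : blockOf s (R j) = v := mem_block.mp (hSB (S.orderEmbOfFin_mem hS j))
  have hwv (i) : w i < v :=
    (mem_wideRight.mp (mem_filter.mp (hVW (V.orderEmbOfFin_mem hV i))).2).1
  have hx (i) : ∃ a, blockOf s a = w i ∧ G.Adj a (R (π i)) :=
    (mem_rightEnds.mp (hSV _ (V.orderEmbOfFin_mem hV _) (S.orderEmbOfFin_mem hS (π i)))).2
  choose x hxw hx using hx
  refine hG x R ⟨fun i j hij => ?_, R.strictMono, fun i j => ?_, hx⟩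
  · exact lt_of_blockOf_lt (s := s) (by simpa [hxw] using w.strictMono hij)
  · exact lt_of_blockOf_lt (s := s) (by simpa [hxw, hRv] using hwv i)

lemma SplitFree.card_edgePairs_le_of_blockGraph (hG : SplitFree π G) (hs : 0 < s) :
    #(edgePairs G) ≤ (n / s + 1) * (s * s) + #(edgePairs (blockGraph s G)) * (k * k) +
      2 * ((n / s + 1) * (s.choose k * k)) * (s * s) := by
  have hL := card_le_card_mul_of_rows _ (hG.card_wideLeft_row_le hs)
  have hR := card_le_card_mul_of_cols _ (hG.card_wideRight_col_le hs)
  simp only [Fintype.card_fin] at hL hR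
  have hsum (X : Finset (Fin (n / s + 1) × Fin (n / s + 1))) (c : ℕ) :
      ∑ q, (if q ∈ X then c else 0) = #X * c := by
    rw [sum_ite_mem, univ_inter, sum_const, smul_eq_mul]
  calc #(edgePairs G) ≤ ∑ q, #(edgesOver s G q) := card_edgePairs_le_sum_card_edgesOver s G
    _ ≤ _ := sum_le_sum fun q _ => card_edgesOver_le (k := k) hs q
    _ = (n / s + 1) * (s * s) + #(edgePairs (blockGraph s G)) * (k * k) +
          (#(wideLeft s k G) + #(wideRight s k G)) * (s * s) := by
      simp only [sum_add_distrib, hsum, diag_card, card_univ, Fintype.card_fin]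
      ring
    _ ≤ _ := by gcongr; omega

end MarcusTardos

/-- With blocks of size `s = 4k²`, this constant makes the recursion of
`SplitFree.card_edgePairs_le_of_blockGraph` close up. -/
def splitFreeEdgeConst (k : ℕ) : ℕ := 4 * (4 * k ^ 2) * (1 + 2 * k * (4 * k ^ 2).choose k)

lemma splitFreeEdgeConst_step {k n m E : ℕ} (hE : E ≤ splitFreeEdgeConst k * m)
    (hm : m * (4 * k ^ 2) ≤ 2 * n) :
    m * (4 * k ^ 2 * (4 * k ^ 2)) + E * (k * k) +
      2 * (m * ((4 * k ^ 2).choose k * k)) * (4 * k ^ 2 * (4 * k ^ 2)) ≤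
      splitFreeEdgeConst k * n := by
  set C := (4 * k ^ 2).choose k
  have hA : splitFreeEdgeConst k = 4 * (4 * k ^ 2) * (1 + 2 * k * C) := rfl
  have h1 : E * (k * k) ≤ splitFreeEdgeConst k * m * (k * k) := Nat.mul_le_mul_right _ hE
  have h2 : splitFreeEdgeConst k * (m * (4 * k ^ 2)) ≤ splitFreeEdgeConst k * (2 * n) :=
    Nat.mul_le_mul_left _ hm
  rw [hA] at h1 h2 ⊢
  nlinarith

theorem SplitFree.card_edgePairs_le {k : ℕ} {π : Equiv.Perm (Fin k)} {n : ℕ}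
    {G : SimpleGraph (Fin n)} (hG : SplitFree π G) :
    #(edgePairs G) ≤ splitFreeEdgeConst k * n := by
  induction n using Nat.strong_induction_on with
  | _ n ih =>
  have hk := hG.pos
  have hs : 0 < 4 * k ^ 2 := by positivity
  have hsA : 4 * k ^ 2 ≤ splitFreeEdgeConst k :=
    calc 4 * k ^ 2 ≤ 4 * (4 * k ^ 2) := by omega
      _ ≤ splitFreeEdgeConst k := Nat.le_mul_of_pos_right _ (by positivity)
  obtain hn | hn := lt_or_ge n (4 * k ^ 2)
  · calc #(edgePairs G) ≤ n * n := by simpa using card_le_univ (edgePairs G)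
      _ ≤ splitFreeEdgeConst k * n := Nat.mul_le_mul_right _ (by omega)
  have hm : n / (4 * k ^ 2) + 1 < n := by
    have : n / (4 * k ^ 2) ≤ n / 4 := Nat.div_le_div_left (by nlinarith) (by norm_num)
    omega
  have hms : (n / (4 * k ^ 2) + 1) * (4 * k ^ 2) ≤ 2 * n := by
    have := Nat.div_mul_le_self n (4 * k ^ 2)
    rw [add_mul, one_mul]
    omega
  exact (hG.card_edgePairs_le_of_blockGraph hs).trans
    (splitFreeEdgeConst_step (ih _ hm (splitFree_blockGraph hG)) hms)

section Counting

variable {k : ℕ} {π : Equiv.Perm (Fin k)}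

lemma card_le_two_pow_of_edgePairs_subset {n : ℕ} {𝒢 : Finset (SimpleGraph (Fin n))}
    {X : Finset (Fin n × Fin n)} (h : ∀ G ∈ 𝒢, edgePairs G ⊆ X) : #𝒢 ≤ 2 ^ #X := by
  rw [← card_powerset]
  exact card_le_card_of_injOn edgePairs (fun G hG => mem_powerset.mpr (h G hG))
    edgePairs_injective.injOn

open Classical in
noncomputable def splitFreeGraphs (π : Equiv.Perm (Fin k)) (n : ℕ) :
    Finset (SimpleGraph (Fin n)) :=
  univ.filter (SplitFree π)

@[simp]
lemma mem_splitFreeGraphs {n : ℕ} {G : SimpleGraph (Fin n)} :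
    G ∈ splitFreeGraphs π n ↔ SplitFree π G := by
  simp [splitFreeGraphs]

open Classical in
/-- A split-free graph is determined by its block graph for blocks of size two together with
a subset of the pairs lying over the diagonal or over an edge of the block graph. -/
lemma card_splitFreeGraphs_fiber_le {n : ℕ} (H : SimpleGraph (Fin (n / 2 + 1)))
    (hH : SplitFree π H) :
    #{G ∈ splitFreeGraphs π n | blockGraph 2 G = H} ≤
      2 ^ (4 * (splitFreeEdgeConst k + 1) * (n / 2 + 1)) := by
  refine (card_le_two_pow_of_edgePairs_subset fun G hG => ?_).trans
    (Nat.pow_le_pow_right two_pos ((card_biUnion_blockPairs_le two_pos H).trans ?_))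
  · rw [← (mem_filter.mp hG).2]
    exact edgePairs_subset_biUnion_blockPairs G
  · have := hH.card_edgePairs_le
    nlinarith

open Classical in
theorem card_splitFreeGraphs_le (n : ℕ) :
    #(splitFreeGraphs π n) ≤ 2 ^ (12 * (splitFreeEdgeConst k + 1) * n) := by
  induction n using Nat.strong_induction_on with
  | _ n ih =>
  obtain hn | hn := lt_or_ge n 3
  · calc #(splitFreeGraphs π n) ≤ 2 ^ #(univ : Finset (Fin n × Fin n)) :=
          card_le_two_pow_of_edgePairs_subset fun G _ => subset_univ _
      _ ≤ 2 ^ (12 * (splitFreeEdgeConst k + 1) * n) := by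
          gcongr
          · norm_num
          · simp only [card_univ, Fintype.card_prod, Fintype.card_fin]
            nlinarith
  set A := splitFreeEdgeConst k
  set m := n / 2 + 1 with hm
  calc #(splitFreeGraphs π n)
      = ∑ H ∈ splitFreeGraphs π m, #{G ∈ splitFreeGraphs π n | blockGraph 2 G = H} :=
        card_eq_sum_card_fiberwise fun G hG => by
          simpa using splitFree_blockGraph (mem_splitFreeGraphs.mp hG)
    _ ≤ #(splitFreeGraphs π m) * 2 ^ (4 * (A + 1) * m) :=
        sum_le_card_nsmul _ _ _ fun H hH =>
          card_splitFreeGraphs_fiber_le H (mem_splitFreeGraphs.mp hH)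
    _ ≤ 2 ^ (12 * (A + 1) * m) * 2 ^ (4 * (A + 1) * m) := by
        gcongr
        exact ih _ (by omega)
    _ = 2 ^ ((A + 1) * (4 * (4 * m))) := by ring
    _ ≤ 2 ^ ((A + 1) * (4 * (3 * n))) :=
        Nat.pow_le_pow_right two_pos (Nat.mul_le_mul_left _ (Nat.mul_le_mul_left _ (by omega)))
    _ = 2 ^ (12 * (A + 1) * n) := by ring

end Counting

theorem IsHereditary.HpermGraph_mem {P : ∀ n : ℕ, Set (SimpleGraph (Fin n))}
    (hP : IsHereditary P) (hdeg : ∀ n : ℕ, ∀ G ∈ P n, ∀ v : Fin n, (G.neighborSet v).ncard ≤ 1)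
    (hspeed : ∀ c : ℝ, 0 < c → ∃ N : ℕ, c ^ N < ((P N).ncard : ℝ)) {k : ℕ}
    (π : Equiv.Perm (Fin k)) : HpermGraph k π ∈ P (2 * k) := by
  by_contra hπ
  have hsub (n : ℕ) : P n ⊆ splitFreeGraphs π n := fun G hG =>
    mem_splitFreeGraphs.mpr fun _ _ h => hπ (HpermGraph_mem_of_splitCopy hP hG (hdeg n G hG) h)
  obtain ⟨N, hN⟩ := hspeed (2 ^ (12 * (splitFreeEdgeConst k + 1))) (by positivity)
  have hle : (P N).ncard ≤ 2 ^ (12 * (splitFreeEdgeConst k + 1) * N) :=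
    ((Set.ncard_le_ncard (hsub N)).trans_eq (Set.ncard_coe_finset _)).trans
      (card_splitFreeGraphs_le N)
  rw [pow_mul] at hle
  exact hN.not_ge (by exact_mod_cast hle)

section SplitMatching

variable {n k : ℕ}

def cutEmb (c : ℕ) (x : Fin n) : Fin (2 * n) :=
  if x.1 < c then finL n x else finR n x

lemma cutEmb_strictMono (c : ℕ) : StrictMono (cutEmb (n := n) c) := by
  intro x y hxy
  simp only [cutEmb]
  split_ifs <;> simp only [finL, finR, Fin.lt_def] at hxy ⊢ <;> omega

lemma cutEmb_eq_finL_iff {c : ℕ} {x i : Fin n} : cutEmb c x = finL n i ↔ x.1 < c ∧ x = i := by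
  unfold cutEmb
  split_ifs with h
  · simp [h, (finL_injective n).eq_iff]
  · simp [h, finR_ne_finL]

lemma cutEmb_eq_finR_iff {c : ℕ} {x j : Fin n} : cutEmb c x = finR n j ↔ c ≤ x.1 ∧ x = j := by
  unfold cutEmb
  split_ifs with h
  · simp [h, finL_ne_finR]
  · simp [(finR_injective n).eq_iff]
    omega

lemma comap_cutEmb_HpermGraph_adj {c : ℕ} {σ : Equiv.Perm (Fin n)} {x y : Fin n} :
    ((HpermGraph n σ).comap (cutEmb c)).Adj x y ↔
      (x.1 < c ∧ c ≤ y.1 ∧ σ x = y) ∨ (y.1 < c ∧ c ≤ x.1 ∧ σ y = x) := by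
  simp only [SimpleGraph.comap_adj, HpermGraph_adj, cutEmb_eq_finL_iff, cutEmb_eq_finR_iff]
  aesop

/-- The involution of `[2k]` exchanging `i` and `π(i) + k`. -/
def splitPairing (π : Equiv.Perm (Fin k)) : Equiv.Perm (Fin (2 * k)) :=
  (finSumFinEquiv.trans (finCongr (two_mul k).symm)).permCongr
    ((Equiv.sumCongr π π.symm).trans (Equiv.sumComm _ _))

lemma splitPairing_finL (π : Equiv.Perm (Fin k)) (i : Fin k) :
    splitPairing π (finL k i) = finR k (π i) := by
  have h : (finSumFinEquiv.trans (finCongr (two_mul k).symm)).symm (finL k i) = Sum.inl i := by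
    rw [Equiv.symm_apply_eq]
    rfl
  simp only [splitPairing, Equiv.permCongr_apply, h]
  rfl

def splitMatching (U : Finset (Fin n)) (hU : U.card = 2 * k) (π : Equiv.Perm (Fin k)) :
    SimpleGraph (Fin n) :=
  (HpermGraph k π).map (U.orderEmbOfFin hU).toEmbedding

variable {U : Finset (Fin n)} {hU : U.card = 2 * k} {π : Equiv.Perm (Fin k)}

lemma splitMatching_adj {x y : Fin n} :
    (splitMatching U hU π).Adj x y ↔
      (∃ i, U.orderEmbOfFin hU (finL k i) = x ∧ U.orderEmbOfFin hU (finR k (π i)) = y) ∨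
      (∃ i, U.orderEmbOfFin hU (finL k i) = y ∧ U.orderEmbOfFin hU (finR k (π i)) = x) := by
  simp only [splitMatching, SimpleGraph.map_adj, HpermGraph_adj]
  aesop

lemma splitMatching_support : (splitMatching U hU π).support = U := by
  rw [splitMatching, SimpleGraph.support_map, HpermGraph_support, Set.image_univ]
  exact range_orderEmbOfFin U hU

/-- Take for `σ` the permutation of `[n]` swapping the two ends of each edge and fixing the
other vertices, and cut `[n]` just after the last left end. -/
lemma exists_splitMatching_eq_comap_cutEmb (U : Finset (Fin n)) (hU : U.card = 2 * k)
    (π : Equiv.Perm (Fin k)) :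
    ∃ c σ, splitMatching U hU π = (HpermGraph n σ).comap (cutEmb c) := by
  set e := U.orderEmbOfFin hU
  obtain ⟨c, hc⟩ : ∃ c : ℕ, ∀ t, (e t).1 < c ↔ t.1 < k := by
    rcases Nat.eq_zero_or_pos k with rfl | hk
    · exact ⟨0, fun t => by simp⟩
    · exact ⟨e ⟨k, by omega⟩, fun t => by rw [← Fin.lt_def, e.lt_iff_lt, Fin.lt_def]⟩
  set σ := (splitPairing π).viaFintypeEmbedding e.toEmbedding
  have hσ (i : Fin k) : σ (e (finL k i)) = e (finR k (π i)) := by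
    simpa [σ, splitPairing_finL] using
      (splitPairing π).viaFintypeEmbedding_apply_image e.toEmbedding (finL k i)
  have key (x y : Fin n) :
      (x.1 < c ∧ c ≤ y.1 ∧ σ x = y) ↔ ∃ i, e (finL k i) = x ∧ e (finR k (π i)) = y := by
    constructor
    · rintro ⟨hx, hy, rfl⟩
      by_cases hxe : x ∈ Set.range e.toEmbedding
      · obtain ⟨t, rfl⟩ := hxe
        have ht : t.1 < k := (hc t).mp hx
        exact ⟨⟨t, ht⟩, rfl, (hσ ⟨t, ht⟩).symm⟩
      · rw [Equiv.Perm.viaFintypeEmbedding_apply_notMem_range _ _ hxe] at hy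
        omega
    · rintro ⟨i, rfl, rfl⟩
      refine ⟨(hc _).mpr i.isLt, ?_, hσ i⟩
      exact not_lt.mp fun h => by simpa [finR] using (hc _).mp h
  refine ⟨c, σ, SimpleGraph.ext (funext₂ fun x y => propext ?_)⟩
  rw [splitMatching_adj, comap_cutEmb_HpermGraph_adj, key, key]

lemma IsHereditary.splitMatching_mem {P : ∀ n : ℕ, Set (SimpleGraph (Fin n))}
    (hP : IsHereditary P) (hH : ∀ (m : ℕ) (σ : Equiv.Perm (Fin m)), HpermGraph m σ ∈ P (2 * m))
    (U : Finset (Fin n)) (hU : U.card = 2 * k) (π : Equiv.Perm (Fin k)) :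
    splitMatching U hU π ∈ P n := by
  obtain ⟨c, σ, h⟩ := exists_splitMatching_eq_comap_cutEmb U hU π
  rw [h]
  exact hP.comap_mem (hH n σ) (cutEmb_strictMono c)

end SplitMatching

theorem IsHereditary.sum_choose_mul_factorial_le_ncard {P : ∀ n : ℕ, Set (SimpleGraph (Fin n))}
    (hP : IsHereditary P) (hH : ∀ (m : ℕ) (σ : Equiv.Perm (Fin m)), HpermGraph m σ ∈ P (2 * m))
    (n : ℕ) : ∑ k ∈ range (n / 2 + 1), n.choose (2 * k) * k.factorial ≤ (P n).ncard := by
  let Φ : (Σ k : Fin (n / 2 + 1), {U : Finset (Fin n) // #U = 2 * k} × Equiv.Perm (Fin k)) →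
      SimpleGraph (Fin n) := fun x => splitMatching x.2.1.1 x.2.1.2 x.2.2
  have hΦ : Function.Injective Φ := by
    rintro ⟨k, ⟨U, hU⟩, π⟩ ⟨k', ⟨U', hU'⟩, π'⟩ h
    obtain rfl : U = U' := by
      simpa [Φ, splitMatching_support] using congrArg SimpleGraph.support h
    obtain rfl : k = k' := Fin.ext (by omega)
    obtain rfl : π = π' := HpermGraph_injective (SimpleGraph.map_injective _ h)
    rfl
  calc ∑ k ∈ range (n / 2 + 1), n.choose (2 * k) * k.factorial
      = Nat.card (Σ k : Fin (n / 2 + 1),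
          {U : Finset (Fin n) // #U = 2 * k} × Equiv.Perm (Fin k)) := by
        rw [Nat.card_eq_fintype_card, Fintype.card_sigma,
          ← Fin.sum_univ_eq_sum_range (fun k => n.choose (2 * k) * k.factorial)]
        simp [Fintype.card_perm]
    _ = (Set.range Φ).ncard := (Set.ncard_range_of_injective hΦ).symm
    _ ≤ (P n).ncard := Set.ncard_le_ncard
        (Set.range_subset_iff.mpr fun x => hP.splitMatching_mem hH _ _ _) (Set.toFinite _)

theorem stmt6 (P : ∀ n : ℕ, Set (SimpleGraph (Fin n)))
    -- `P` is hereditary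
    (hhered : ∀ n : ℕ, ∀ G ∈ P n, ∀ U : Finset (Fin n), inducedOG G U ∈ P U.card)
    -- every graph in `P` has maximum degree at most 1
    (hdeg : ∀ n : ℕ, ∀ G ∈ P n, ∀ v : Fin n, (G.neighborSet v).ncard ≤ 1)
    -- for every constant `c > 0` there is `N` with `|P_N| > c^N`
    (hspeed : ∀ c : ℝ, 0 < c → ∃ N : ℕ, c ^ N < ((P N).ncard : ℝ)) :
    (∀ (k : ℕ) (π : Equiv.Perm (Fin k)), HpermGraph k π ∈ P (2 * k)) ∧
    (∀ n : ℕ, ∑ k ∈ Finset.range (n / 2 + 1), n.choose (2 * k) * k.factorial ≤ (P n).ncard) := by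
  have hH (k : ℕ) (π : Equiv.Perm (Fin k)) : HpermGraph k π ∈ P (2 * k) :=
    IsHereditary.HpermGraph_mem hhered hdeg hspeed π
  exact ⟨hH, IsHereditary.sum_choose_mul_factorial_le_ncard hhered hH⟩
end

section
/- For every k ∈ ℕ there exists a constant C such that for all m, n ∈ ℕ, every m×n (0,1)-matrix with at least C·n entries equal to 1, with at most two 1's in each row, and with pairwise distinct rows, contains a member of each class of M(k). -/
/-- The number of entries of the `(0,1)`-matrix `A` that equal 1. -/
def onesCount {m n : ℕ} (A : Fin m → Fin n → Bool) : ℕ :=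
  (Finset.univ.filter fun p : Fin m × Fin n => A p.1 p.2 = true).card

/-- `A` contains a member of each class of `M(k)`: for every permutation `σ` of `[k]` there
are pairwise distinct rows `r 1, …, r k` and columns `c 1 < … < c (2k)` such that
`A (r i) (c i) = 1` and `A (r i) (c (k + σ i)) = 1` for every `i ∈ [k]`. -/
def ContainsMk {m n : ℕ} (k : ℕ) (A : Fin m → Fin n → Bool) : Prop :=
  ∀ σ : Equiv.Perm (Fin k), ∃ r : Fin k → Fin m, ∃ c : Fin (2 * k) → Fin n,
    Function.Injective r ∧ StrictMono c ∧
    ∀ i : Fin k, A (r i) (c (finL k i)) = true ∧ A (r i) (c (finR k (σ i))) = true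

/-!
Rows of `A` with two ones are edges `u < v` of an ordered graph on the columns, and distinct
rows give distinct edges, so a matrix with `C n` ones yields at least `((C - 1) n) / 2` edges.
A member of the class of `σ` in `M(k)` is an ordered matching `L₁ < ⋯ < L_k < R₁ < ⋯ < R_k`
with edges `L_i R_{σ i}`. In the adjacency matrix of the graph such a matching appears as soon
as the matrix contains the permutation matrix of the skew sum `σ ⊖ 1`: its extra one sits
below and to the left of the copy of `σ`, and since edges lie above the diagonal it forces
every row of the copy before every column. By the Marcus–Tardos theorem, proved by block
contraction, a matrix avoiding a fixed permutation matrix has only linearly many ones.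
-/

open Finset

namespace PermPattern

variable {k : ℕ}

/-- `E` is read as the support of a `(0,1)`-matrix with rows and columns indexed by `ℕ`. -/
def ContainsPerm (σ : Equiv.Perm (Fin k)) (E : Finset (ℕ × ℕ)) : Prop :=
  ∃ r c : Fin k → ℕ, StrictMono r ∧ StrictMono c ∧ ∀ i, (r i, c (σ i)) ∈ E

lemma containsPerm_of_isEmpty [IsEmpty (Fin k)] (σ : Equiv.Perm (Fin k))
    (E : Finset (ℕ × ℕ)) : ContainsPerm σ E :=
  ⟨isEmptyElim, isEmptyElim, fun i => isEmptyElim i, fun i => isEmptyElim i, isEmptyElim⟩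

lemma ContainsPerm.of_image_swap {σ : Equiv.Perm (Fin k)} {E : Finset (ℕ × ℕ)}
    (h : ContainsPerm σ⁻¹ (E.image Prod.swap)) : ContainsPerm σ E := by
  obtain ⟨r, c, hr, hc, hrc⟩ := h
  refine ⟨c, r, hc, hr, fun i => ?_⟩
  simpa using hrc (σ i)

def blockOf (s : ℕ) : ℕ × ℕ → ℕ × ℕ := Prod.map (· / s) (· / s)

lemma ContainsPerm.of_image_blockOf {σ : Equiv.Perm (Fin k)} {E : Finset (ℕ × ℕ)} {s : ℕ}
    (h : ContainsPerm σ (E.image (blockOf s))) : ContainsPerm σ E := by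
  obtain ⟨r, c, hr, hc, hrc⟩ := h
  have hpick : ∀ i, ∃ e ∈ E, e.1 / s = r i ∧ e.2 / s = c (σ i) := fun i => by
    simpa [blockOf, Prod.ext_iff] using hrc i
  choose e heE he₁ he₂ using hpick
  refine ⟨fun i => (e i).1, fun j => (e (σ⁻¹ j)).2, fun i j hij => ?_, fun i j hij => ?_,
    fun i => by simpa using heE i⟩
  · exact Nat.lt_of_div_lt_div (c := s) (by rw [he₁, he₁]; exact hr hij)
  · exact Nat.lt_of_div_lt_div (c := s) (by simpa [he₂] using hc hij)

lemma image_blockOf_subset {s n : ℕ} {E : Finset (ℕ × ℕ)} (hEn : E ⊆ range n ×ˢ range n) :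
    E.image (blockOf s) ⊆ range (n / s + 1) ×ˢ range (n / s + 1) := by
  intro p hp
  obtain ⟨e, he, rfl⟩ := mem_image.1 hp
  have := mem_product.1 (hEn he)
  simp only [mem_range, mem_product, blockOf, Prod.map_fst, Prod.map_snd] at this ⊢
  exact ⟨Nat.lt_succ_of_le (Nat.div_le_div_right this.1.le),
    Nat.lt_succ_of_le (Nat.div_le_div_right this.2.le)⟩

def blockRows (s : ℕ) (E : Finset (ℕ × ℕ)) (p : ℕ × ℕ) : Finset ℕ :=
  (E.filter fun e => blockOf s e = p).image Prod.fst

def blockCols (s : ℕ) (E : Finset (ℕ × ℕ)) (p : ℕ × ℕ) : Finset ℕ :=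
  (E.filter fun e => blockOf s e = p).image Prod.snd

lemma blockRows_image_swap (s : ℕ) (E : Finset (ℕ × ℕ)) (p : ℕ × ℕ) :
    blockRows s (E.image Prod.swap) p.swap = blockCols s E p := by
  ext v
  simp [blockRows, blockCols, blockOf, Prod.ext_iff, and_comm]

lemma mem_Ico_of_div_eq {s v b : ℕ} (hs : 0 < s) (h : v / s = b) :
    v ∈ Ico (b * s) (b * s + s) := by
  rw [Nat.div_eq_iff hs] at h
  rw [mem_Ico]
  omega

lemma card_blockRows_le {s : ℕ} (hs : 0 < s) (E : Finset (ℕ × ℕ)) (p : ℕ × ℕ) :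
    (blockRows s E p).card ≤ s := by
  calc (blockRows s E p).card ≤ (Ico (p.1 * s) (p.1 * s + s)).card := card_le_card fun v hv => ?_
    _ = s := by simp
  obtain ⟨e, he, rfl⟩ := mem_image.1 hv
  simp only [mem_filter, blockOf, Prod.map, Prod.ext_iff] at he
  exact mem_Ico_of_div_eq hs he.2.1

lemma card_blockCols_le {s : ℕ} (hs : 0 < s) (E : Finset (ℕ × ℕ)) (p : ℕ × ℕ) :
    (blockCols s E p).card ≤ s := by
  rw [← blockRows_image_swap]
  exact card_blockRows_le hs _ _

lemma card_block_le {s : ℕ} (hs : 0 < s) (E : Finset (ℕ × ℕ)) (p : ℕ × ℕ) :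
    (E.filter fun e => blockOf s e = p).card ≤ (k - 1) ^ 2 +
      (if k ≤ (blockRows s E p).card then s ^ 2 else 0) +
      (if k ≤ (blockCols s E p).card then s ^ 2 else 0) := by
  have hprod := (card_le_card (subset_product (s := E.filter fun e => blockOf s e = p))).trans
    (card_product _ _).le
  rw [← blockRows, ← blockCols] at hprod
  have hss := Nat.mul_le_mul (card_blockRows_le hs E p) (card_blockCols_le hs E p)
  simp only [sq]
  split_ifs with h₁ h₂ h₂
  · omega
  · omega
  · omega
  · have := Nat.mul_le_mul (Nat.le_sub_one_of_lt (not_le.1 h₁))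
      (Nat.le_sub_one_of_lt (not_le.1 h₂))
    omega

lemma containsPerm_of_rows_meet_blocks {σ : Equiv.Perm (Fin k)} {E : Finset (ℕ × ℕ)}
    {s : ℕ} {T B : Finset ℕ} (hT : T.card = k) (hB : B.card = k)
    (hTB : ∀ t ∈ T, ∀ b ∈ B, ∃ w, (t, w) ∈ E ∧ w / s = b) : ContainsPerm σ E := by
  have hpick : ∀ i, ∃ w, (T.orderEmbOfFin hT i, w) ∈ E ∧ w / s = B.orderEmbOfFin hB (σ i) :=
    fun i => hTB _ (T.orderEmbOfFin_mem hT i) _ (B.orderEmbOfFin_mem hB (σ i))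
  choose w hwE hws using hpick
  refine ⟨T.orderEmbOfFin hT, fun j => w (σ⁻¹ j), (T.orderEmbOfFin hT).strictMono,
    fun i j hij => ?_, fun i => by simpa using hwE i⟩
  exact Nat.lt_of_div_lt_div (c := s) (by simpa [hws] using hij)

/-- Each block with `k` occupied rows picks a `k`-subset of the `s` rows of its block row, and
`k` blocks picking the same subset carry a copy of `σ`. -/
lemma card_le_of_forall_le_card_blockRows {σ : Equiv.Perm (Fin k)} {E : Finset (ℕ × ℕ)}
    {s : ℕ} (hs : 0 < s) (hE : ¬ ContainsPerm σ E) (b : ℕ) {W : Finset ℕ}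
    (hW : ∀ b' ∈ W, k ≤ (blockRows s E (b, b')).card) :
    W.card ≤ (k - 1) * s.choose k := by
  by_contra! hcard
  have hpick : ∀ b' ∈ W, ∃ T ⊆ blockRows s E (b, b'), T.card = k :=
    fun b' hb' => exists_subset_card_eq (hW b' hb')
  choose! T hTsub hTcard using hpick
  have hmaps : ∀ b' ∈ W, T b' ∈ (Ico (b * s) (b * s + s)).powersetCard k := by
    intro b' hb'
    refine mem_powersetCard.2 ⟨fun v hv => ?_, hTcard b' hb'⟩
    obtain ⟨e, he, rfl⟩ := mem_image.1 (hTsub b' hb' hv)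
    simp only [mem_filter, blockOf, Prod.map, Prod.ext_iff] at he
    exact mem_Ico_of_div_eq hs he.2.1
  obtain ⟨T₀, hT₀, hfiber⟩ := exists_lt_card_fiber_of_mul_lt_card_of_maps_to hmaps
    (by rwa [card_powersetCard, Nat.card_Ico, Nat.add_sub_cancel_left, mul_comm])
  obtain ⟨B, hBsub, hBcard⟩ :=
    exists_subset_card_eq (show k ≤ (W.filter (T · = T₀)).card by omega)
  refine hE (containsPerm_of_rows_meet_blocks (s := s) (mem_powersetCard.1 hT₀).2 hBcard
    fun t ht b' hb' => ?_)
  obtain ⟨hb'W, rfl⟩ := mem_filter.1 (hBsub hb')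
  obtain ⟨e, he, rfl⟩ := mem_image.1 (hTsub b' hb'W ht)
  simp only [mem_filter, blockOf, Prod.map, Prod.ext_iff] at he
  exact ⟨e.2, he.1, he.2.2⟩

lemma card_filter_blockRows_le {σ : Equiv.Perm (Fin k)} {E : Finset (ℕ × ℕ)} {s n : ℕ}
    (hs : 0 < s) (hE : ¬ ContainsPerm σ E) (hEn : E ⊆ range n ×ˢ range n) :
    ((E.image (blockOf s)).filter fun p => k ≤ (blockRows s E p).card).card ≤
      (k - 1) * s.choose k * (n / s + 1) := by
  rw [← card_range (n / s + 1)]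
  refine card_le_mul_card_image_of_maps_to (f := Prod.fst)
    (fun p hp => (mem_product.1 (image_blockOf_subset hEn (mem_filter.1 hp).1)).1) _
    fun b _ => ?_
  rw [← card_image_of_injOn (f := Prod.snd) fun p hp q hq hpq =>
    Prod.ext ((mem_filter.1 hp).2.trans (mem_filter.1 hq).2.symm) hpq]
  refine card_le_of_forall_le_card_blockRows hs hE b fun b' hb' => ?_
  obtain ⟨p, hp, rfl⟩ := mem_image.1 hb'
  simp only [mem_filter] at hp
  obtain ⟨⟨-, hpk⟩, rfl⟩ := hp
  exact hpk

/-- Blocks with `k` occupied rows or columns are few, and every other occupied block holds at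
most `(k - 1) ^ 2` points. -/
lemma card_le_card_image_blockOf {σ : Equiv.Perm (Fin k)} {E : Finset (ℕ × ℕ)} {s n : ℕ}
    (hs : 0 < s) (hE : ¬ ContainsPerm σ E) (hEn : E ⊆ range n ×ˢ range n) :
    E.card ≤ (k - 1) ^ 2 * (E.image (blockOf s)).card +
      2 * s ^ 2 * ((k - 1) * s.choose k) * (n / s + 1) := by
  set P := E.image (blockOf s)
  have hrows := card_filter_blockRows_le hs hE hEn
  have hcols : (P.filter fun p => k ≤ (blockCols s E p).card).card ≤
      (k - 1) * s.choose k * (n / s + 1) := by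
    refine (card_le_card_of_injOn Prod.swap (fun p hp => ?_) Prod.swap_injective.injOn).trans
      (card_filter_blockRows_le (σ := σ⁻¹) hs (fun h => hE h.of_image_swap)
        (fun x hx => by obtain ⟨e, he, rfl⟩ := mem_image.1 hx; simpa [and_comm] using hEn he))
    obtain ⟨hpP, hpk⟩ := mem_filter.1 hp
    obtain ⟨e, he, rfl⟩ := mem_image.1 hpP
    refine mem_filter.2 ⟨mem_image.2 ⟨e.swap, mem_image_of_mem _ he, rfl⟩, ?_⟩
    rwa [blockRows_image_swap]
  calc E.card = ∑ p ∈ P, (E.filter fun e => blockOf s e = p).card := card_eq_sum_card_image _ _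
    _ ≤ ∑ p ∈ P, ((k - 1) ^ 2 + (if k ≤ (blockRows s E p).card then s ^ 2 else 0) +
          (if k ≤ (blockCols s E p).card then s ^ 2 else 0)) :=
        sum_le_sum fun p _ => card_block_le hs E p
    _ = (k - 1) ^ 2 * P.card + s ^ 2 * (P.filter fun p => k ≤ (blockRows s E p).card).card +
          s ^ 2 * (P.filter fun p => k ≤ (blockCols s E p).card).card := by
        simp only [sum_add_distrib, ← sum_filter, sum_const, smul_eq_mul]
        ring
    _ ≤ _ := by nlinarith

/-- The Marcus–Tardos theorem. -/
theorem exists_card_le_of_not_containsPerm (k : ℕ) :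
    ∃ c, ∀ (σ : Equiv.Perm (Fin k)) (n : ℕ) (E : Finset (ℕ × ℕ)),
      E ⊆ range n ×ˢ range n → ¬ ContainsPerm σ E → E.card ≤ c * n := by
  rcases k.eq_zero_or_pos with rfl | hk
  · exact ⟨0, fun σ n E _ hE => (hE (containsPerm_of_isEmpty σ E)).elim⟩
  -- blocks of side `2 k²` make the recursion contract by the factor `(k - 1)² / k² < 1`
  obtain ⟨s, hs_def⟩ : ∃ s, s = 2 * k ^ 2 := ⟨_, rfl⟩
  obtain ⟨D, hD_def⟩ : ∃ D, D = 2 * s ^ 2 * ((k - 1) * s.choose k) := ⟨_, rfl⟩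
  have hk2 : 1 ≤ k ^ 2 := Nat.one_le_pow 2 k hk
  have hs : 2 ≤ s := by omega
  have hkc : (k - 1) ^ 2 * (D + 2 * s) + D ≤ k ^ 2 * (D + 2 * s) := by
    obtain ⟨a, rfl⟩ : ∃ a, k = a + 1 := ⟨k - 1, by omega⟩
    simp only [Nat.add_sub_cancel]
    nlinarith
  refine ⟨D + 2 * s, fun σ n => ?_⟩
  induction n using Nat.strong_induction_on with
  | _ n ih =>
  intro E hEn hE
  have hsq : E.card ≤ n * n := (card_le_card hEn).trans (by simp)
  by_cases hn : n ≤ 2 * s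
  · nlinarith
  have hkN : k ^ 2 * (n / s + 1) ≤ n := by nlinarith [Nat.div_mul_le_self n s]
  have hN : n / s + 1 < n := by
    have : n / s ≤ n / 2 := Nat.div_le_div_left hs two_pos
    omega
  have hP := ih _ hN _ (image_blockOf_subset hEn) fun h => hE h.of_image_blockOf
  have hE' := card_le_card_image_blockOf (s := s) (by omega) hE hEn
  rw [← hD_def] at hE'
  refine Nat.le_of_mul_le_mul_left (c := k ^ 2) ?_ (by positivity)
  calc k ^ 2 * E.card ≤ k ^ 2 * ((k - 1) ^ 2 * ((D + 2 * s) * (n / s + 1)) + D * (n / s + 1)) :=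
        Nat.mul_le_mul_left _ (hE'.trans (by gcongr))
    _ = ((k - 1) ^ 2 * (D + 2 * s) + D) * (k ^ 2 * (n / s + 1)) := by ring
    _ ≤ (k ^ 2 * (D + 2 * s)) * n := Nat.mul_le_mul hkc hkN
    _ = k ^ 2 * ((D + 2 * s) * n) := by ring

/-- The skew sum `σ ⊖ 1`: rows `0, …, k - 1` carry `σ` on the columns `1, …, k`, and the last
row has its one in column `0`. -/
def skewSum (σ : Equiv.Perm (Fin k)) : Equiv.Perm (Fin (k + 1)) :=
  Equiv.Perm.decomposeFin.symm (0, σ) * finRotate (k + 1)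

lemma skewSum_castSucc (σ : Equiv.Perm (Fin k)) (i : Fin k) :
    skewSum σ i.castSucc = (σ i).succ := by
  simp [skewSum, Equiv.Perm.decomposeFin_symm_apply_succ]

lemma skewSum_last (σ : Equiv.Perm (Fin k)) : skewSum σ (Fin.last k) = 0 := by
  simp [skewSum, Equiv.Perm.decomposeFin_symm_apply_zero]

lemma exists_separated_of_containsPerm_skewSum {σ : Equiv.Perm (Fin k)} {E : Finset (ℕ × ℕ)}
    (hE : ∀ e ∈ E, e.1 < e.2) (h : ContainsPerm (skewSum σ) E) :
    ∃ L R : Fin k → ℕ, StrictMono L ∧ StrictMono R ∧ (∀ i j, L i < R j) ∧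
      ∀ i, (L i, R (σ i)) ∈ E := by
  obtain ⟨r, c, hr, hc, hrc⟩ := h
  have hsep : r (Fin.last k) < c 0 := by simpa [skewSum_last] using hE _ (hrc (Fin.last k))
  refine ⟨r ∘ Fin.castSucc, c ∘ Fin.succ, hr.comp Fin.strictMono_castSucc,
    hc.comp Fin.strictMono_succ, fun i j => ?_,
    fun i => by simpa [skewSum_castSucc] using hrc i.castSucc⟩
  calc r i.castSucc < r (Fin.last k) := hr (Fin.castSucc_lt_last i)
    _ < c 0 := hsep
    _ < c j.succ := hc (Fin.succ_pos j)

end PermPattern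

lemma exists_strictMono_finL_finR {α : Type*} [Preorder α] {k : ℕ} {L R : Fin k → α}
    (hL : StrictMono L) (hR : StrictMono R) (hLR : ∀ i j, L i < R j) :
    ∃ c : Fin (2 * k) → α, StrictMono c ∧ (∀ i, c (finL k i) = L i) ∧
      ∀ j, c (finR k j) = R j := by
  refine ⟨fun a => if h : a.1 < k then L ⟨a, h⟩ else R ⟨a - k, by omega⟩, fun a b hab => ?_,
    fun i => by simp [finL], fun j => by simp [finR]⟩
  have hab : a.1 < b.1 := hab
  dsimp only
  split_ifs with ha hb hb
  · exact hL (Fin.mk_lt_mk.2 hab)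
  · exact hLR _ _
  · omega
  · exact hR (Fin.mk_lt_mk.2 (by omega))

section RowPairs

variable {m n : ℕ}

def rowSupport (A : Fin m → Fin n → Bool) (i : Fin m) : Finset (Fin n) :=
  univ.filter fun j => A i j = true

def pairGraph (A : Fin m → Fin n → Bool) : Finset (ℕ × ℕ) :=
  ((univ : Finset (Fin n × Fin n)).filter fun e =>
    e.1 < e.2 ∧ ∃ i, rowSupport A i = {e.1, e.2}).image (Prod.map Fin.val Fin.val)

lemma rowSupport_injective {A : Fin m → Fin n → Bool} (hA : Function.Injective A) :
    Function.Injective (rowSupport A) := fun i j h => hA <| funext fun x => by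
  simpa [rowSupport] using congrArg (x ∈ ·) h

lemma onesCount_eq_sum_card_rowSupport (A : Fin m → Fin n → Bool) :
    onesCount A = ∑ i, (rowSupport A i).card := by
  rw [onesCount, card_filter, Fintype.sum_prod_type]
  simp only [rowSupport, card_filter]

lemma pairGraph_subset (A : Fin m → Fin n → Bool) : pairGraph A ⊆ range n ×ˢ range n := by
  intro e he
  obtain ⟨e, -, rfl⟩ := mem_image.1 he
  simp

lemma fst_lt_snd_of_mem_pairGraph {A : Fin m → Fin n → Bool} {e : ℕ × ℕ}
    (he : e ∈ pairGraph A) : e.1 < e.2 := by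
  rw [pairGraph, mem_image] at he
  obtain ⟨e, he, rfl⟩ := he
  exact (mem_filter.1 he).2.1

lemma card_filter_card_rowSupport_eq_one_le {A : Fin m → Fin n → Bool}
    (hA : Function.Injective A) :
    (univ.filter fun i => (rowSupport A i).card = 1).card ≤ n := by
  rw [← card_image_of_injective _ (rowSupport_injective hA)]
  refine (card_le_card_of_surjOn (s := univ) (fun j => {j}) fun T hT => ?_).trans_eq
    (card_fin n)
  obtain ⟨i, hi, rfl⟩ := mem_image.1 hT
  obtain ⟨j, hj⟩ := card_eq_one.1 (mem_filter.1 hi).2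
  exact ⟨j, mem_coe.2 (mem_univ j), hj.symm⟩

lemma card_filter_card_rowSupport_eq_two_le {A : Fin m → Fin n → Bool}
    (hA : Function.Injective A) :
    (univ.filter fun i => (rowSupport A i).card = 2).card ≤ (pairGraph A).card := by
  rw [← card_image_of_injective _ (rowSupport_injective hA), pairGraph,
    card_image_of_injective _ (Fin.val_injective.prodMap Fin.val_injective)]
  refine card_le_card_of_surjOn (fun e => {e.1, e.2}) fun T hT => ?_
  obtain ⟨i, hi, rfl⟩ := mem_image.1 hT
  obtain ⟨x, y, hxy, hi⟩ := card_eq_two.1 (mem_filter.1 hi).2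
  rcases hxy.lt_or_gt with h | h
  · exact ⟨(x, y), by simpa using ⟨h, i, hi⟩, hi.symm⟩
  · exact ⟨(y, x), by simpa using ⟨h, i, hi.trans (pair_comm x y)⟩, by simp [hi, pair_comm]⟩

lemma onesCount_le {A : Fin m → Fin n → Bool} (hrow : ∀ i, (rowSupport A i).card ≤ 2)
    (hA : Function.Injective A) : onesCount A ≤ n + 2 * (pairGraph A).card := by
  calc onesCount A = ∑ i, (rowSupport A i).card := onesCount_eq_sum_card_rowSupport A
    _ ≤ ∑ i, ((if (rowSupport A i).card = 1 then 1 else 0) +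
          (if (rowSupport A i).card = 2 then 2 else 0)) :=
        sum_le_sum fun i _ => by have := hrow i; split_ifs <;> omega
    _ = (univ.filter fun i => (rowSupport A i).card = 1).card +
          2 * (univ.filter fun i => (rowSupport A i).card = 2).card := by
        simp only [sum_add_distrib, ← sum_filter, sum_const, smul_eq_mul]
        ring
    _ ≤ n + 2 * (pairGraph A).card := by
        gcongr
        · exact card_filter_card_rowSupport_eq_one_le hA
        · exact card_filter_card_rowSupport_eq_two_le hA

/-- The rows are distinct because the support of a row carrying an edge is exactly that edge,
and the edges `L_i R_{σ i}` are disjoint. -/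
lemma exists_rows_of_separated {k : ℕ} {A : Fin m → Fin n → Bool} {σ : Equiv.Perm (Fin k)}
    {L R : Fin k → ℕ} (hL : StrictMono L) (hR : StrictMono R) (hLR : ∀ i j, L i < R j)
    (hE : ∀ i, (L i, R (σ i)) ∈ pairGraph A) :
    ∃ r : Fin k → Fin m, ∃ c : Fin (2 * k) → Fin n, Function.Injective r ∧ StrictMono c ∧
      ∀ i, A (r i) (c (finL k i)) = true ∧ A (r i) (c (finR k (σ i))) = true := by
  have hpick : ∀ i, ∃ e : Fin n × Fin n, ∃ w, rowSupport A w = {e.1, e.2} ∧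
      (e.1 : ℕ) = L i ∧ (e.2 : ℕ) = R (σ i) := fun i => by
    obtain ⟨e, he, he'⟩ := mem_image.1 (hE i)
    obtain ⟨w, hw⟩ := (mem_filter.1 he).2.2
    exact ⟨e, w, hw, Prod.ext_iff.1 he'⟩
  choose e w hw hL' hR' using hpick
  obtain ⟨c, hc, hcL, hcR⟩ := exists_strictMono_finL_finR (L := fun i => (e i).1)
    (R := fun j => (e (σ⁻¹ j)).2) (fun i j hij => by simpa [Fin.lt_def, hL'] using hL hij)
    (fun i j hij => by simpa [Fin.lt_def, hR'] using hR hij)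
    (fun i j => by simpa [Fin.lt_def, hL', hR'] using hLR i j)
  refine ⟨w, c, fun i j hij => ?_, hc, fun i => ?_⟩
  · have : (e i).1 ∈ rowSupport A (w j) := by simp [← hij, hw]
    rw [hw j, mem_insert, mem_singleton, Fin.ext_iff, Fin.ext_iff, hL', hL', hR'] at this
    rcases this with h | h
    · exact hL.injective h
    · exact absurd h (hLR i (σ j)).ne
  · have hmem : ∀ x ∈ rowSupport A (w i), A (w i) x = true := fun x hx => (mem_filter.1 hx).2
    simp only [hcL, hcR, Equiv.Perm.inv_def, Equiv.symm_apply_apply]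
    exact ⟨hmem _ (by simp [hw]), hmem _ (by simp [hw])⟩

end RowPairs

theorem stmt9 (k : ℕ) :
    ∃ C : ℕ, ∀ m n : ℕ, 1 ≤ n → ∀ A : Fin m → Fin n → Bool,
      C * n ≤ onesCount A →
      (∀ i : Fin m, (Finset.univ.filter fun j => A i j = true).card ≤ 2) →
      Function.Injective A → ContainsMk k A := by
  obtain ⟨c, hc⟩ := PermPattern.exists_card_le_of_not_containsPerm (k + 1)
  refine ⟨2 * c + 2, fun m n hn A hones hrow hA σ => ?_⟩
  by_cases h : PermPattern.ContainsPerm (PermPattern.skewSum σ) (pairGraph A)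
  · obtain ⟨L, R, hL, hR, hLR, hE⟩ := PermPattern.exists_separated_of_containsPerm_skewSum
      (fun e => fst_lt_snd_of_mem_pairGraph) h
    exact exists_rows_of_separated hL hR hLR hE
  · have hsparse := hc _ n _ (pairGraph_subset A) h
    have hdense := onesCount_le hrow hA
    nlinarith
end
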